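/- arXiv:1701.02270 — 2 statements merged into one kernel-verified Lean document; each statement's English description precedes it below -/
import Mathlib

section
/- Let u, v : ℝ⁴ → ℝ be smooth functions satisfying, at every point of ℝ⁴, the equations u₂ − v₁ = 0 and u₃v₄ − u₄v₃ − 1 = 0, where subscripts denote partial derivatives with respect to the corresponding coordinate. For λ ∈ ℝ define vector fields X, Y : ℝ⁴ → ℝ⁴ by X(x) = u₃(x)·e₄ − u₄(x)·e₃ + λ·e₁ and Y(x) = −v₃(x)·e₄ + v₄(x)·e₃ − λ·e₂. Then for every λ ∈ ℝ the Lie bracket [X, Y] vanishes identically on ℝ⁴. -/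
/-- The `i`-th standard basis vector of `ℝ^d` (0-based index). -/
def stdV (d i : ℕ) : Fin d → ℝ := fun j => if (j : ℕ) = i then 1 else 0

/-- Partial derivative of `f : ℝ^d → ℝ` in the `i`-th coordinate direction (0-based index). -/
noncomputable def pd (d : ℕ) (f : (Fin d → ℝ) → ℝ) (i : ℕ) (x : Fin d → ℝ) : ℝ :=
  fderiv ℝ f x (stdV d i)

/-- Lie bracket of vector fields: `[X,Y](x) = DY(x)(X(x)) - DX(x)(Y(x))`. -/
noncomputable def lieB (d : ℕ) (X Y : (Fin d → ℝ) → (Fin d → ℝ)) (x : Fin d → ℝ) :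
    Fin d → ℝ :=
  fderiv ℝ Y x (X x) - fderiv ℝ X x (Y x)

lemma pd_def {d : ℕ} (g : (Fin d → ℝ) → ℝ) (j : ℕ) (x : Fin d → ℝ) :
    fderiv ℝ g x (stdV d j) = pd d g j x := rfl

lemma pd_contDiff {d : ℕ} {f : (Fin d → ℝ) → ℝ} (hf : ContDiff ℝ (⊤ : ℕ∞) f) (i : ℕ) :
    ContDiff ℝ (⊤ : ℕ∞) (pd d f i) :=
  (ContinuousLinearMap.apply ℝ ℝ (stdV d i)).contDiff.comp (hf.fderiv_right (m := ((⊤ : ℕ∞) : WithTop ℕ∞)) (by simp))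

lemma pd_diff {d : ℕ} {f : (Fin d → ℝ) → ℝ} (hf : ContDiff ℝ (⊤ : ℕ∞) f) (i : ℕ) :
    Differentiable ℝ (pd d f i) :=
  (pd_contDiff hf i).differentiable (by simp)

lemma pd_comm {d : ℕ} {f : (Fin d → ℝ) → ℝ} (hf : ContDiff ℝ (⊤ : ℕ∞) f) (i j : ℕ)
    (x : Fin d → ℝ) : pd d (pd d f i) j x = pd d (pd d f j) i x := by
  have hdf : ∀ y, HasFDerivAt f (fderiv ℝ f y) y := fun y =>
    ((hf.differentiable (by simp)) y).hasFDerivAt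
  have hdd : HasFDerivAt (fderiv ℝ f) (fderiv ℝ (fderiv ℝ f) x) x :=
    (((hf.fderiv_right (m := ((⊤ : ℕ∞) : WithTop ℕ∞)) (by simp)).differentiable (by simp)) x).hasFDerivAt
  have key : ∀ a b : Fin d → ℝ, fderiv ℝ (fderiv ℝ f) x a b = fderiv ℝ (fderiv ℝ f) x b a :=
    fun a b => second_derivative_symmetric hdf hdd a b
  have comp : ∀ i j : ℕ, pd d (pd d f i) j x = fderiv ℝ (fderiv ℝ f) x (stdV d j) (stdV d i) := by
    intro i j
    have : (pd d f i) = (ContinuousLinearMap.apply ℝ ℝ (stdV d i)) ∘ (fderiv ℝ f) := rfl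
    rw [pd, this, fderiv_comp x (ContinuousLinearMap.differentiableAt _)
      (((hf.fderiv_right (m := ((⊤ : ℕ∞) : WithTop ℕ∞)) (by simp)).differentiable (by simp)) x)]
    simp
  rw [comp, comp, key]

theorem stmt7 (u v : (Fin 4 → ℝ) → ℝ)
    (hu : ContDiff ℝ (⊤ : ℕ∞) u) (hv : ContDiff ℝ (⊤ : ℕ∞) v)
    (h1 : ∀ x, pd 4 u 1 x - pd 4 v 0 x = 0)
    (h2 : ∀ x, pd 4 u 2 x * pd 4 v 3 x - pd 4 u 3 x * pd 4 v 2 x - 1 = 0) :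
    ∀ lam : ℝ, ∀ x : Fin 4 → ℝ,
      lieB 4
        (fun y => pd 4 u 2 y • stdV 4 3 - pd 4 u 3 y • stdV 4 2 + lam • stdV 4 0)
        (fun y => -pd 4 v 2 y • stdV 4 3 + pd 4 v 3 y • stdV 4 2 - lam • stdV 4 1)
        x = 0 := by
  intro lam x
  have hu2 := pd_diff hu 2
  have hu3 := pd_diff hu 3
  have hv2 := pd_diff hv 2
  have hv3 := pd_diff hv 3
  -- derivative of equation h1
  have hfun1 : pd 4 u 1 = pd 4 v 0 := funext fun y => by linarith [h1 y]
  have E1 : ∀ j, pd 4 (pd 4 u 1) j x = pd 4 (pd 4 v 0) j x := fun j => by rw [hfun1]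
  -- derivative of equation h2
  have hgfun : (fun y => pd 4 u 2 y * pd 4 v 3 y - pd 4 u 3 y * pd 4 v 2 y)
      = fun _ => (1 : ℝ) := funext fun y => by linarith [h2 y]
  have E2 : ∀ j, pd 4 (pd 4 u 2) j x * pd 4 v 3 x + pd 4 u 2 x * pd 4 (pd 4 v 3) j x
      - (pd 4 (pd 4 u 3) j x * pd 4 v 2 x + pd 4 u 3 x * pd 4 (pd 4 v 2) j x) = 0 := by
    intro j
    have hA : fderiv ℝ (fun y => pd 4 u 2 y * pd 4 v 3 y - pd 4 u 3 y * pd 4 v 2 y) x = 0 := by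
      rw [hgfun]; simp
    rw [fderiv_fun_sub ((hu2 x).fun_mul (hv3 x)) ((hu3 x).fun_mul (hv2 x)),
      fderiv_fun_mul (hu2 x) (hv3 x), fderiv_fun_mul (hu3 x) (hv2 x)] at hA
    have hB := congrArg (fun (L : (Fin 4 → ℝ) →L[ℝ] ℝ) => L (stdV 4 j)) hA
    simp only [ContinuousLinearMap.sub_apply, ContinuousLinearMap.add_apply,
      ContinuousLinearMap.smul_apply, ContinuousLinearMap.zero_apply, smul_eq_mul] at hB
    simp only [pd] at hB ⊢
    linarith
  -- Schwarz
  have Su : ∀ i j, pd 4 (pd 4 u i) j x = pd 4 (pd 4 u j) i x := fun i j => pd_comm hu i j x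
  have Sv : ∀ i j, pd 4 (pd 4 v i) j x = pd 4 (pd 4 v j) i x := fun i j => pd_comm hv i j x
  -- derivatives of the vector fields
  have hX : HasFDerivAt
      (fun y => pd 4 u 2 y • stdV 4 3 - pd 4 u 3 y • stdV 4 2 + lam • stdV 4 0)
      ((fderiv ℝ (pd 4 u 2) x).smulRight (stdV 4 3)
        - (fderiv ℝ (pd 4 u 3) x).smulRight (stdV 4 2)) x := by
    have a := ((hu2 x).hasFDerivAt).smul_const (stdV 4 3)
    have b := ((hu3 x).hasFDerivAt).smul_const (stdV 4 2)
    simpa using (a.sub b).add_const (lam • stdV 4 0)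
  have hY : HasFDerivAt
      (fun y => -pd 4 v 2 y • stdV 4 3 + pd 4 v 3 y • stdV 4 2 - lam • stdV 4 1)
      (((-(fderiv ℝ (pd 4 v 2) x)).smulRight (stdV 4 3)
        + (fderiv ℝ (pd 4 v 3) x).smulRight (stdV 4 2))) x := by
    have a := (((hv2 x).hasFDerivAt).neg).smul_const (stdV 4 3)
    have b := ((hv3 x).hasFDerivAt).smul_const (stdV 4 2)
    simpa using (a.add b).sub_const (lam • stdV 4 1)
  rw [lieB, hX.fderiv, hY.fderiv]
  simp only [ContinuousLinearMap.sub_apply, ContinuousLinearMap.add_apply,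
    ContinuousLinearMap.smulRight_apply, ContinuousLinearMap.neg_apply,
    map_add, map_sub, map_smul, map_neg, smul_eq_mul]
  funext j
  fin_cases j <;>
    simp only [Pi.sub_apply, Pi.add_apply, Pi.smul_apply, Pi.neg_apply, Pi.zero_apply,
      stdV, smul_eq_mul] <;>
    norm_num
  · simp only [pd_def]
    linear_combination E2 3 + pd 4 u 3 x * Sv 2 3 - pd 4 v 3 x * Su 2 3
      + lam * Sv 3 0 - lam * E1 3 - lam * Su 3 1
  · simp only [pd_def]
    linear_combination (-1 : ℝ) * E2 2 - pd 4 u 2 x * Sv 2 3 + pd 4 v 2 x * Su 2 3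
      + lam * Su 2 1 + lam * E1 2 - lam * Sv 2 0
end

section
/- Let u, v : ℝ⁵ → ℝ be smooth functions satisfying, at every point of ℝ⁵, the equations u₂ − v₁ = 0 and u₄ + v₅ + u₁v₃ − u₃v₁ = 0, where subscripts denote partial derivatives with respect to the corresponding coordinate. For λ ∈ ℝ define vector fields X, Y : ℝ⁵ → ℝ⁵ by X(x) = e₅ + u₁(x)·e₃ − u₃(x)·e₁ + λ·e₁ and Y(x) = e₄ − v₁(x)·e₃ + v₃(x)·e₁ − λ·e₂. Then for every λ ∈ ℝ the Lie bracket [X, Y] vanishes identically on ℝ⁵. -/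
lemma pd_smooth {u : (Fin 5 → ℝ) → ℝ} (hu : ContDiff ℝ (⊤ : ℕ∞) u) (i : ℕ) :
    ContDiff ℝ (⊤ : ℕ∞) (pd 5 u i) := by
  unfold pd
  exact (hu.fderiv_right (m := ((⊤ : ℕ∞) : WithTop ℕ∞)) (by simp)).clm_apply contDiff_const

lemma fderiv_pd_apply {u : (Fin 5 → ℝ) → ℝ} (hu : ContDiff ℝ (⊤ : ℕ∞) u)
    (i : ℕ) (x w : Fin 5 → ℝ) :
    fderiv ℝ (pd 5 u i) x w = fderiv ℝ (fderiv ℝ u) x w (stdV 5 i) := by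
  have hd2 : DifferentiableAt ℝ (fderiv ℝ u) x :=
    ((hu.fderiv_right (m := ((⊤ : ℕ∞) : WithTop ℕ∞)) (by simp)).differentiable
      (by norm_cast)).differentiableAt
  have h := fderiv_clm_apply (c := fderiv ℝ u) (u := fun _ => stdV 5 i) hd2
    (differentiableAt_const _)
  unfold pd
  rw [h]
  simp

lemma pd_symm {u : (Fin 5 → ℝ) → ℝ} (hu : ContDiff ℝ (⊤ : ℕ∞) u) (i j : ℕ) (x : Fin 5 → ℝ) :
    fderiv ℝ (pd 5 u i) x (stdV 5 j) = fderiv ℝ (pd 5 u j) x (stdV 5 i) := by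
  rw [fderiv_pd_apply hu, fderiv_pd_apply hu]
  exact (hu.contDiffAt.isSymmSndFDerivAt (by simp only [minSmoothness_of_isRCLikeNormedField]; exact WithTop.coe_le_coe.mpr le_top)).eq _ _

theorem stmt11 (u v : (Fin 5 → ℝ) → ℝ)
    (hu : ContDiff ℝ (⊤ : ℕ∞) u) (hv : ContDiff ℝ (⊤ : ℕ∞) v)
    (h1 : ∀ x, pd 5 u 1 x - pd 5 v 0 x = 0)
    (h2 : ∀ x, pd 5 u 3 x + pd 5 v 4 x
        + pd 5 u 0 x * pd 5 v 2 x - pd 5 u 2 x * pd 5 v 0 x = 0) :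
    ∀ lam : ℝ, ∀ x : Fin 5 → ℝ,
      lieB 5
        (fun y => stdV 5 4 + pd 5 u 0 y • stdV 5 2 - pd 5 u 2 y • stdV 5 0 + lam • stdV 5 0)
        (fun y => stdV 5 3 - pd 5 v 0 y • stdV 5 2 + pd 5 v 2 y • stdV 5 0 - lam • stdV 5 1)
        x = 0 := by
  intro lam x
  have hdu : ∀ i, DifferentiableAt ℝ (pd 5 u i) x := fun i =>
    ((pd_smooth hu i).differentiable (by norm_cast)).differentiableAt
  have hdv : ∀ i, DifferentiableAt ℝ (pd 5 v i) x := fun i =>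
    ((pd_smooth hv i).differentiable (by norm_cast)).differentiableAt
  -- derivative of X
  have hX : HasFDerivAt
      (fun y => stdV 5 4 + pd 5 u 0 y • stdV 5 2 - pd 5 u 2 y • stdV 5 0 + lam • stdV 5 0)
      ((fderiv ℝ (pd 5 u 0) x).smulRight (stdV 5 2)
        - (fderiv ℝ (pd 5 u 2) x).smulRight (stdV 5 0)) x := by
    exact ((((hdu 0).hasFDerivAt.smul_const (stdV 5 2)).const_add (stdV 5 4)).sub
      ((hdu 2).hasFDerivAt.smul_const (stdV 5 0))).add_const (lam • stdV 5 0)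
  -- derivative of Y
  have hY : HasFDerivAt
      (fun y => stdV 5 3 - pd 5 v 0 y • stdV 5 2 + pd 5 v 2 y • stdV 5 0 - lam • stdV 5 1)
      ((fderiv ℝ (pd 5 v 2) x).smulRight (stdV 5 0)
        - (fderiv ℝ (pd 5 v 0) x).smulRight (stdV 5 2)) x := by
    have h := ((((hdv 0).hasFDerivAt.smul_const (stdV 5 2)).const_sub (stdV 5 3)).add
      ((hdv 2).hasFDerivAt.smul_const (stdV 5 0))).sub_const (lam • stdV 5 1)
    simpa [neg_add_eq_sub] using h
  -- derivative of constraint 1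
  have h1' : pd 5 u 1 = pd 5 v 0 := funext fun y => sub_eq_zero.mp (h1 y)
  -- derivative of constraint 2
  have hF : HasFDerivAt
      (fun y => pd 5 u 3 y + pd 5 v 4 y + pd 5 u 0 y * pd 5 v 2 y - pd 5 u 2 y * pd 5 v 0 y)
      (fderiv ℝ (pd 5 u 3) x + fderiv ℝ (pd 5 v 4) x
        + (pd 5 u 0 x • fderiv ℝ (pd 5 v 2) x + pd 5 v 2 x • fderiv ℝ (pd 5 u 0) x)
        - (pd 5 u 2 x • fderiv ℝ (pd 5 v 0) x + pd 5 v 0 x • fderiv ℝ (pd 5 u 2) x)) x :=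
    (((hdu 3).hasFDerivAt.add (hdv 4).hasFDerivAt).add
      ((hdu 0).hasFDerivAt.mul (hdv 2).hasFDerivAt)).sub
      ((hdu 2).hasFDerivAt.mul (hdv 0).hasFDerivAt)
  have hF0 : HasFDerivAt
      (fun y => pd 5 u 3 y + pd 5 v 4 y + pd 5 u 0 y * pd 5 v 2 y - pd 5 u 2 y * pd 5 v 0 y)
      (0 : (Fin 5 → ℝ) →L[ℝ] ℝ) x := by
    have : (fun y => pd 5 u 3 y + pd 5 v 4 y + pd 5 u 0 y * pd 5 v 2 y
        - pd 5 u 2 y * pd 5 v 0 y) = fun _ => (0 : ℝ) := funext h2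
    rw [this]
    exact hasFDerivAt_const 0 x
  have hD2 : ∀ w : Fin 5 → ℝ,
      fderiv ℝ (pd 5 u 3) x w + fderiv ℝ (pd 5 v 4) x w
        + (pd 5 u 0 x * fderiv ℝ (pd 5 v 2) x w + pd 5 v 2 x * fderiv ℝ (pd 5 u 0) x w)
        - (pd 5 u 2 x * fderiv ℝ (pd 5 v 0) x w + pd 5 v 0 x * fderiv ℝ (pd 5 u 2) x w) = 0 := by
    intro w
    have := hF.unique hF0
    have h := congrArg (fun L : (Fin 5 → ℝ) →L[ℝ] ℝ => L w) this
    simpa using h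
  -- expand the bracket
  simp only [lieB, hX.fderiv, hY.fderiv]
  simp only [ContinuousLinearMap.coe_sub', Pi.sub_apply, ContinuousLinearMap.smulRight_apply,
    map_add, map_sub, map_smul, smul_eq_mul]
  -- symmetry
  have sU := pd_symm hu
  have sV := pd_symm hv
  have h1'' : ∀ w, fderiv ℝ (pd 5 u 1) x w = fderiv ℝ (pd 5 v 0) x w := fun w => by rw [h1']
  funext j
  fin_cases j
  · norm_num [stdV]
    rw [sV 2 4 x, sV 2 0 x, sU 2 3 x, sU 2 1 x, sU 2 0 x, h1'']
    linarith [hD2 (stdV 5 2)]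
  · norm_num [stdV]
  · norm_num [stdV]
    rw [sV 0 4 x, sV 0 2 x, sU 0 3 x, sU 0 1 x, sU 0 2 x, h1'']
    linarith [hD2 (stdV 5 0)]
  · norm_num [stdV]
  · norm_num [stdV]
end
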